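/- arXiv:2303.03867 — 9 statements merged into one kernel-verified Lean document; each statement's English description precedes it below -/
import Mathlib

section
/- Let K be a category, F : K ⥤ K an endofunctor admitting a right adjoint R, O an object of K, and J a (small) category. If K has all colimits of shape J, then the category F-Mly of F-Mealy machines with output O has all colimits of shape J, and the forgetful functor F-Mly → K sending (E,d,s) to E creates colimits of shape J (so colimits are computed as in K on carriers). -/
open CategoryTheory Limits

universe w w' v u

/-- An `F`-Mealy machine with output `O`: a carrier `E` with maps `d : F E ⟶ E`
and `s : F E ⟶ O`. -/
structure FMealy {K : Type u} [Category.{v} K] (F : K ⥤ K) (O : K) : Type max u v where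
  E : K
  d : F.obj E ⟶ E
  s : F.obj E ⟶ O

namespace FMealy

variable {K : Type u} [Category.{v} K] {F : K ⥤ K} {O : K}

/-- A morphism of `F`-Mealy machines. -/
@[ext]
structure Hom (M N : FMealy F O) : Type v where
  f : M.E ⟶ N.E
  hd : M.d ≫ f = F.map f ≫ N.d
  hs : M.s = F.map f ≫ N.s

instance : Category (FMealy F O) where
  Hom := Hom
  id M := ⟨𝟙 M.E, by simp, by simp⟩
  comp u v := ⟨u.f ≫ v.f, by
      rw [F.map_comp, Category.assoc, ← v.hd, ← Category.assoc, u.hd, Category.assoc], by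
      rw [F.map_comp, Category.assoc, ← v.hs, u.hs]⟩
  id_comp u := Hom.ext (Category.id_comp u.f)
  comp_id u := Hom.ext (Category.comp_id u.f)
  assoc u v w := Hom.ext (Category.assoc u.f v.f w.f)

/-- The forgetful functor sending a machine `(E, d, s)` to its carrier `E`. -/
def forget (F : K ⥤ K) (O : K) : FMealy F O ⥤ K where
  obj M := M.E
  map u := u.f

end FMealy

/-! A left adjoint `F` preserves colimits, so for a colimit cocone `ι_j : E_j ⟶ E` in `K` the maps
`F ι_j` exhibit `F E` as a colimit as well. The cocones `d_j ≫ ι_j` and `s_j` out of `F E_j` then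
induce the structure maps `d : F E ⟶ E` and `s : F E ⟶ O`, which is the only way to make every
`ι_j` a morphism of machines; a cocone of machines factors through `E` in `K`, and the factorization
is a morphism of machines because this can be tested after precomposing with the jointly
epimorphic `F ι_j`. Since the forgetful functor reflects isomorphisms, lifting colimit cocones
in this way is enough for it to create them. -/

namespace FMealy

variable {K : Type u} [Category.{v} K] {F : K ⥤ K} {O : K}

@[ext]
lemma hom_ext {M N : FMealy F O} {u v : M ⟶ N} (h : u.f = v.f) : u = v :=
  Hom.ext h

@[simp]
lemma comp_f {M N P : FMealy F O} (u : M ⟶ N) (v : N ⟶ P) : (u ≫ v).f = u.f ≫ v.f := rfl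

@[simp]
lemma forget_obj (M : FMealy F O) : (forget F O).obj M = M.E := rfl

@[simp]
lemma forget_map {M N : FMealy F O} (u : M ⟶ N) : (forget F O).map u = u.f := rfl

def isoMk {M N : FMealy F O} (e : M.E ≅ N.E) (hd : M.d ≫ e.hom = F.map e.hom ≫ N.d)
    (hs : M.s = F.map e.hom ≫ N.s) : M ≅ N where
  hom := ⟨e.hom, hd, hs⟩
  inv := ⟨e.inv, by
      rw [Iso.comp_inv_eq, Category.assoc, hd, ← F.map_comp_assoc, e.inv_hom_id, F.map_id,
        Category.id_comp], by
      rw [hs, ← F.mapIso_hom, ← F.mapIso_inv, Iso.inv_hom_id_assoc]⟩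

instance : (forget F O).ReflectsIsomorphisms where
  reflects u (_ : IsIso u.f) := (isoMk (asIso u.f) u.hd u.hs).isIso_hom

section Colimits

variable {J : Type w} [Category.{w'} J] (D : J ⥤ FMealy F O)

def transitionCocone (c : Cocone (D ⋙ forget F O)) : Cocone ((D ⋙ forget F O) ⋙ F) where
  pt := c.pt
  ι.app j := (D.obj j).d ≫ c.ι.app j
  ι.naturality j j' f := by
    dsimp
    rw [Category.comp_id, ← c.w f]
    exact ((reassoc_of% (D.map f).hd) _).symm

def outputCocone : Cocone ((D ⋙ forget F O) ⋙ F) where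
  pt := O
  ι.app j := (D.obj j).s
  ι.naturality j j' f := by simp [← (D.map f).hs]

variable {D} {c : Cocone (D ⋙ forget F O)}

lemma map_ι_comp_desc_transitionCocone (hc : IsColimit (F.mapCocone c)) (j : J) :
    F.map (c.ι.app j) ≫ hc.desc (transitionCocone D c) = (D.obj j).d ≫ c.ι.app j :=
  hc.fac _ j

lemma map_ι_comp_desc_outputCocone (hc : IsColimit (F.mapCocone c)) (j : J) :
    F.map (c.ι.app j) ≫ hc.desc (outputCocone D) = (D.obj j).s :=
  hc.fac _ j

def liftedCocone (hc : IsColimit (F.mapCocone c)) : Cocone D where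
  pt := ⟨c.pt, hc.desc (transitionCocone D c), hc.desc (outputCocone D)⟩
  ι.app j := ⟨c.ι.app j, (map_ι_comp_desc_transitionCocone hc j).symm,
    (map_ι_comp_desc_outputCocone hc j).symm⟩
  ι.naturality j j' f := by ext; simpa using c.w f

def isColimitLiftedCocone (t : IsColimit c) (hc : IsColimit (F.mapCocone c)) :
    IsColimit (liftedCocone hc) where
  desc m := by
    set g := t.desc ((forget F O).mapCocone m)
    have fac : ∀ j, c.ι.app j ≫ g = (m.ι.app j).f := t.fac ((forget F O).mapCocone m)
    refine ⟨g, hc.hom_ext fun j => ?_, hc.hom_ext fun j => ?_⟩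
    · erw [← Category.assoc, map_ι_comp_desc_transitionCocone, Category.assoc, fac, (m.ι.app j).hd,
        ← F.map_comp_assoc, fac]
      rfl
    · erw [map_ι_comp_desc_outputCocone, (m.ι.app j).hs, ← F.map_comp_assoc, fac]
      rfl
  fac m j := by ext; exact t.fac _ j
  uniq m u hu := by
    ext; exact t.uniq ((forget F O).mapCocone m) u.f fun j => congrArg Hom.f (hu j)

noncomputable def liftsToColimit [PreservesColimit (D ⋙ forget F O) F] (t : IsColimit c) :
    LiftsToColimit D (forget F O) c t where
  liftedCocone := liftedCocone (isColimitOfPreserves F t)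
  validLift := Cocone.ext (Iso.refl _) fun _ => Category.comp_id _
  makesColimit := isColimitLiftedCocone t _

noncomputable instance [PreservesColimitsOfShape J F] : CreatesColimitsOfShape J (forget F O) where
  CreatesColimit := createsColimitOfReflectsIso fun _ t => liftsToColimit t

end Colimits

end FMealy

/-- If `F : K ⥤ K` has a right adjoint `R` and `K` has colimits of shape `J`, then the
category of `F`-Mealy machines with output `O` has colimits of shape `J`, and the
forgetful functor to `K` creates them. -/
theorem fMealy_hasColimitsOfShape_and_forget_createsColimits
    {K : Type u} [Category.{v} K] (F : K ⥤ K) (R : K ⥤ K) (adj : F ⊣ R) (O : K)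
    (J : Type w) [Category.{w'} J] [HasColimitsOfShape J K] :
    HasColimitsOfShape J (FMealy F O) ∧
      Nonempty (CreatesColimitsOfShape J (FMealy.forget F O)) := by
  have : PreservesColimitsOfSize.{w', w} F := adj.leftAdjoint_preservesColimits
  exact ⟨hasColimitsOfShape_of_hasColimitsOfShape_createsColimitsOfShape (FMealy.forget F O),
    ⟨inferInstance⟩⟩
end

section
/- Let K be a category, F : K ⥤ K an endofunctor admitting a right adjoint R, O an object of K, and J a (small) category. If K has all colimits of shape J, then the category F-Mre of F-Moore machines with output O has all colimits of shape J, and the forgetful functor F-Mre → K sending (E,d,s) to E creates colimits of shape J (so colimits are computed as in K on carriers). -/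
open CategoryTheory Limits

universe w w' v u

/-- An `F`-Moore machine with output `O`: a carrier `E` with maps `d : F E ⟶ E`
and `s : E ⟶ O`. -/
structure FMoore {K : Type u} [Category.{v} K] (F : K ⥤ K) (O : K) : Type max u v where
  E : K
  d : F.obj E ⟶ E
  s : E ⟶ O

namespace FMoore

variable {K : Type u} [Category.{v} K] {F : K ⥤ K} {O : K}

/-- A morphism of `F`-Moore machines. -/
@[ext]
structure Hom (M N : FMoore F O) : Type v where
  f : M.E ⟶ N.E
  hd : M.d ≫ f = F.map f ≫ N.d
  hs : M.s = f ≫ N.s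

instance : Category (FMoore F O) where
  Hom := Hom
  id M := ⟨𝟙 M.E, by simp, by simp⟩
  comp u v := ⟨u.f ≫ v.f, by
      rw [F.map_comp, Category.assoc, ← v.hd, ← Category.assoc, u.hd, Category.assoc], by
      rw [Category.assoc, ← v.hs, u.hs]⟩
  id_comp u := Hom.ext (Category.id_comp u.f)
  comp_id u := Hom.ext (Category.comp_id u.f)
  assoc u v w := Hom.ext (Category.assoc u.f v.f w.f)

/-- The forgetful functor sending a machine `(E, d, s)` to its carrier `E`. -/
def forget (F : K ⥤ K) (O : K) : FMoore F O ⥤ K where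
  obj M := M.E
  map u := u.f

end FMoore


/-! Colimits of machines are computed on carriers. Over a colimit `c` of the carriers, the
outputs `s` induce the output map, and the composites `d ≫ ι` induce the dynamics because `F`, a
left adjoint, preserves the colimit `c`. A carrier map out of `c` is then a machine morphism as
soon as its composites with the injections are, since the injections and their images under `F`
are jointly epimorphic. -/

namespace FMoore

variable {K : Type u} [Category.{v} K] {F : K ⥤ K} {O : K}

@[ext]
lemma hom_ext {M N : FMoore F O} {u v : M ⟶ N} (h : u.f = v.f) : u = v := Hom.ext h

noncomputable def Hom.inv {M N : FMoore F O} (u : M ⟶ N) [IsIso u.f] : N ⟶ M where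
  f := CategoryTheory.inv u.f
  hd := by
    rw [← cancel_epi (F.map u.f), ← F.map_comp_assoc, IsIso.hom_inv_id, F.map_id,
      Category.id_comp, ← reassoc_of% u.hd, IsIso.hom_inv_id, Category.comp_id]
  hs := by rw [u.hs, IsIso.inv_hom_id_assoc]

instance : (forget F O).ReflectsIsomorphisms where
  reflects u (_ : IsIso u.f) :=
    ⟨Hom.inv u, hom_ext (IsIso.hom_inv_id u.f), hom_ext (IsIso.inv_hom_id u.f)⟩

section JointlyEpi

variable {ι : Type*} {X : ι → FMoore F O} {L M : FMoore F O}
  (p : ∀ i, X i ⟶ L) (q : ∀ i, X i ⟶ M) (g : L.E ⟶ M.E)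

lemma d_comp_eq_of_jointly_epi (hg : ∀ i, (p i).f ≫ g = (q i).f)
    (hp : ∀ {Y : K} (a b : F.obj L.E ⟶ Y),
      (∀ i, F.map (p i).f ≫ a = F.map (p i).f ≫ b) → a = b) :
    L.d ≫ g = F.map g ≫ M.d :=
  hp _ _ fun i => by
    rw [← Category.assoc, ← (p i).hd, Category.assoc, hg, (q i).hd, ← F.map_comp_assoc, hg]

lemma s_eq_comp_of_jointly_epi (hg : ∀ i, (p i).f ≫ g = (q i).f)
    (hp : ∀ {Y : K} (a b : L.E ⟶ Y), (∀ i, (p i).f ≫ a = (p i).f ≫ b) → a = b) :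
    L.s = g ≫ M.s :=
  hp _ _ fun i => by rw [← (p i).hs, reassoc_of% hg, (q i).hs]

end JointlyEpi

section Colimits

variable {J : Type w} [Category.{w'} J] (D : J ⥤ FMoore F O)

def dynamics : (D ⋙ forget F O) ⋙ F ⟶ D ⋙ forget F O where
  app j := (D.obj j).d
  naturality _ _ φ := (D.map φ).hd.symm

def outputCocone : Cocone (D ⋙ forget F O) where
  pt := O
  ι.app j := (D.obj j).s
  ι.naturality _ _ φ := (D.map φ).hs.symm.trans (Category.comp_id _).symm

variable {D} {c : Cocone (D ⋙ forget F O)} (t : IsColimit c) (tF : IsColimit (F.mapCocone c))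

def liftedCocone : Cocone D where
  pt := ⟨c.pt, tF.desc ((Cocone.precompose (dynamics D)).obj c), t.desc (outputCocone D)⟩
  ι.app j :=
    { f := c.ι.app j
      hd := (tF.fac ((Cocone.precompose (dynamics D)).obj c) j).symm
      hs := (t.fac (outputCocone D) j).symm }
  ι.naturality _ _ φ := by ext; exact (c.w φ).trans (Category.comp_id _).symm

def isColimitLiftedCocone : IsColimit (liftedCocone t tF) where
  desc u :=
    { f := t.desc ((forget F O).mapCocone u)
      hd := d_comp_eq_of_jointly_epi (liftedCocone t tF).ι.app u.ι.app _
        (t.fac ((forget F O).mapCocone u)) fun _ _ h => tF.hom_ext h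
      hs := s_eq_comp_of_jointly_epi (liftedCocone t tF).ι.app u.ι.app _
        (t.fac ((forget F O).mapCocone u)) fun _ _ h => t.hom_ext h }
  fac u j := by ext; exact t.fac ((forget F O).mapCocone u) j
  uniq u m hm := by
    ext
    exact t.uniq ((forget F O).mapCocone u) m.f fun j => congrArg Hom.f (hm j)

noncomputable def liftsToColimit [PreservesColimit (D ⋙ forget F O) F] :
    LiftsToColimit D (forget F O) c t where
  liftedCocone := liftedCocone t (isColimitOfPreserves F t)
  validLift := Cocone.ext (Iso.refl _) fun _ => Category.comp_id _
  makesColimit := isColimitLiftedCocone t (isColimitOfPreserves F t)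

end Colimits

variable (J : Type w) [Category.{w'} J] [PreservesColimitsOfShape J F]

noncomputable instance : CreatesColimitsOfShape J (forget F O) where
  CreatesColimit := createsColimitOfReflectsIso fun _ t => liftsToColimit t

instance [HasColimitsOfShape J K] : HasColimitsOfShape J (FMoore F O) where
  has_colimit D := hasColimit_of_created D (forget F O)

end FMoore

/-- If `F : K ⥤ K` has a right adjoint `R` and `K` has colimits of shape `J`, then the
category of `F`-Moore machines with output `O` has colimits of shape `J`, and the
forgetful functor to `K` creates them. -/
theorem fMoore_hasColimitsOfShape_and_forget_createsColimits
    {K : Type u} [Category.{v} K] (F : K ⥤ K) (R : K ⥤ K) (adj : F ⊣ R) (O : K)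
    (J : Type w) [Category.{w'} J] [HasColimitsOfShape J K] :
    HasColimitsOfShape J (FMoore F O) ∧
      Nonempty (CreatesColimitsOfShape J (FMoore.forget F O)) := by
  have := adj.leftAdjoint_preservesColimits
  exact ⟨inferInstance, ⟨inferInstance⟩⟩
end

section
/- Let K be a category, F : K ⥤ K an endofunctor admitting a right adjoint R, O an object of K, and J a (small) connected category. If K has all limits of shape J, then the category F-Mly of F-Mealy machines with output O has all limits of shape J, and the forgetful functor F-Mly → K sending (E,d,s) to E creates limits of shape J (so connected limits, in particular equalizers, are computed as in K on carriers). -/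
open CategoryTheory Limits

universe w w' v u

/-!
The limit of a connected diagram `D` of machines `(E_j, d_j, s_j)` is built on a limit cone
`π_j : L ⟶ E_j` in `K`. The maps `F(π_j) ≫ d_j : F L ⟶ E_j` form a cone, so they factor through
a unique `d : F L ⟶ L`. The maps `F(π_j) ≫ s_j : F L ⟶ O` are equal along every arrow of `J`,
hence all equal since `J` is connected, and their common value is `s`. Machine morphisms into
`(L, d, s)` are then the `K`-morphisms into `L`, because the two laws can be tested after
composing with each `π_j`.
-/

namespace FMealy

variable {K : Type u} [Category.{v} K] {F : K ⥤ K} {O : K}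

lemma Hom.map_comp_d {M N : FMealy F O} (u : M ⟶ N) {X : K} (g : X ⟶ M.E) :
    F.map (g ≫ u.f) ≫ N.d = (F.map g ≫ M.d) ≫ u.f := by
  rw [F.map_comp, Category.assoc, ← u.hd, Category.assoc]

lemma Hom.map_comp_s {M N : FMealy F O} (u : M ⟶ N) {X : K} (g : X ⟶ M.E) :
    F.map (g ≫ u.f) ≫ N.s = F.map g ≫ M.s := by
  rw [F.map_comp, Category.assoc, ← u.hs]

instance : (forget F O).Faithful := ⟨fun h => Hom.ext h⟩

lemma isIso_of_isIso_f {M N : FMealy F O} (u : M ⟶ N) [IsIso u.f] : IsIso u := by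
  have hd : N.d ≫ inv u.f = F.map (inv u.f) ≫ M.d := by
    rw [← cancel_epi (F.map u.f), ← Category.assoc, ← u.hd, ← F.map_comp_assoc,
      IsIso.hom_inv_id, F.map_id, Category.id_comp, Category.assoc, IsIso.hom_inv_id,
      Category.comp_id]
  have hs : N.s = F.map (inv u.f) ≫ M.s := by
    rw [u.hs, ← F.map_comp_assoc, IsIso.inv_hom_id, F.map_id, Category.id_comp]
  exact ⟨⟨⟨inv u.f, hd, hs⟩, Hom.ext (IsIso.hom_inv_id u.f), Hom.ext (IsIso.inv_hom_id u.f)⟩⟩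

instance inst_s2 : (forget F O).ReflectsIsomorphisms :=
  ⟨fun u (_ : IsIso u.f) => isIso_of_isIso_f u⟩

section Limits

variable {J : Type w} [Category.{w'} J] (D : J ⥤ FMealy F O) (c : Cone (D ⋙ forget F O))

/-- `c.π.app j` with target `(D.obj j).E` instead of `(D ⋙ forget F O).obj j`: the two only agree
after unfolding `forget`, which `rw` does not do. -/
def coneProj (j : J) : c.pt ⟶ (D.obj j).E := c.π.app j

lemma coneProj_comp_f {j k : J} (u : j ⟶ k) : coneProj D c j ≫ (D.map u).f = coneProj D c k :=
  c.w u

def dynamicsCone : Cone (D ⋙ forget F O) where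
  pt := F.obj c.pt
  π :=
    { app := fun j => F.map (coneProj D c j) ≫ (D.obj j).d
      naturality := fun _ k u =>
        (Category.id_comp _).trans <|
          (congrArg (fun g => F.map g ≫ (D.obj k).d) (coneProj_comp_f D c u)).symm.trans
            ((D.map u).map_comp_d _) }

lemma map_coneProj_comp_s_eq [IsPreconnected J] (j j' : J) :
    F.map (coneProj D c j) ≫ (D.obj j).s = F.map (coneProj D c j') ≫ (D.obj j').s := by
  refine constant_of_preserves_morphisms (fun j => F.map (coneProj D c j) ≫ (D.obj j).s)
    (fun _ _ u => ?_) j j'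
  rw [← coneProj_comp_f D c u]
  exact ((D.map u).map_comp_s _).symm

noncomputable def limitS [IsConnected J] : F.obj c.pt ⟶ O :=
  F.map (coneProj D c (Classical.arbitrary J)) ≫ (D.obj (Classical.arbitrary J)).s

lemma limitS_eq [IsConnected J] (j : J) : limitS D c = F.map (coneProj D c j) ≫ (D.obj j).s :=
  map_coneProj_comp_s_eq D c _ j

variable {c} (hc : IsLimit c)

noncomputable def limitD : F.obj c.pt ⟶ c.pt := hc.lift (dynamicsCone D c)

lemma limitD_coneProj (j : J) :
    limitD D hc ≫ coneProj D c j = F.map (coneProj D c j) ≫ (D.obj j).d :=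
  hc.fac _ j

noncomputable def carrierLift (t : Cone D) : t.pt.E ⟶ c.pt := hc.lift ((forget F O).mapCone t)

lemma carrierLift_coneProj (t : Cone D) (j : J) :
    carrierLift D hc t ≫ coneProj D c j = (t.π.app j).f :=
  hc.fac _ j

variable [IsConnected J]

noncomputable def liftCone : Cone D where
  pt := ⟨c.pt, limitD D hc, limitS D c⟩
  π :=
    { app := fun j => ⟨coneProj D c j, limitD_coneProj D hc j, limitS_eq D c j⟩
      naturality := fun _ _ u =>
        Hom.ext ((Category.id_comp _).trans (coneProj_comp_f D c u).symm) }

noncomputable def liftConeHom (t : Cone D) : t.pt ⟶ (liftCone D hc).pt where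
  f := carrierLift D hc t
  hd := hc.hom_ext fun j => by
    show (t.pt.d ≫ carrierLift D hc t) ≫ coneProj D c j =
      (F.map (carrierLift D hc t) ≫ limitD D hc) ≫ coneProj D c j
    rw [Category.assoc, Category.assoc, carrierLift_coneProj, limitD_coneProj,
      ← F.map_comp_assoc, carrierLift_coneProj]
    exact (t.π.app j).hd
  hs := by
    show t.pt.s = F.map (carrierLift D hc t) ≫ limitS D c
    rw [limitS_eq D c (Classical.arbitrary J), ← F.map_comp_assoc, carrierLift_coneProj]
    exact (t.π.app _).hs

noncomputable def isLimitLiftCone : IsLimit (liftCone D hc) :=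
  IsLimit.ofFaithful (forget F O) hc (liftConeHom D hc) fun _ => rfl

noncomputable instance : CreatesLimitsOfShape J (forget F O) where
  CreatesLimit :=
    createsLimitOfReflectsIso fun _ hc =>
      { liftedCone := liftCone _ hc
        validLift := Cone.ext (Iso.refl _) fun _ => (Category.id_comp _).symm
        makesLimit := isLimitLiftCone _ hc }

end Limits

end FMealy

theorem fMealy_hasConnectedLimitsOfShape_and_forget_createsLimits_general
    {K : Type u} [Category.{v} K] (F : K ⥤ K) (O : K)
    (J : Type w) [Category.{w'} J] [IsConnected J] [HasLimitsOfShape J K] :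
    HasLimitsOfShape J (FMealy F O) ∧
      Nonempty (CreatesLimitsOfShape J (FMealy.forget F O)) :=
  ⟨hasLimitsOfShape_of_hasLimitsOfShape_createsLimitsOfShape (FMealy.forget F O),
    ⟨inferInstance⟩⟩

/-- If `F : K ⥤ K` has a right adjoint `R`, `J` is a connected category, and `K` has
limits of shape `J`, then the category of `F`-Mealy machines with output `O` has limits
of shape `J`, and the forgetful functor to `K` creates them. -/
theorem fMealy_hasConnectedLimitsOfShape_and_forget_createsLimits
    {K : Type u} [Category.{v} K] (F : K ⥤ K) (R : K ⥤ K) (adj : F ⊣ R) (O : K)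
    (J : Type w) [Category.{w'} J] [IsConnected J] [HasLimitsOfShape J K] :
    HasLimitsOfShape J (FMealy F O) ∧
      Nonempty (CreatesLimitsOfShape J (FMealy.forget F O)) :=
  fMealy_hasConnectedLimitsOfShape_and_forget_createsLimits_general F O J
end

section
/- Let K be a category with countable products, F : K ⥤ K an endofunctor with a right adjoint R, and O an object of K. Then the category F-Mre of F-Moore machines with output O has a terminal object whose underlying carrier object is the countable product O_∞ = ∏_{n ≥ 0} Rⁿ(O) of the iterates of R applied to O. Explicitly, there is an F-Moore machine structure (O_∞, d_∞, s_∞) such that for every F-Moore machine (E,d,s) there is a unique morphism of F-Moore machines (E,d,s) → (O_∞, d_∞, s_∞). -/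
open CategoryTheory Limits

universe w w' v u

/-- The `n`-fold application of a functor `R` to an object `O`. -/
def iterObj {K : Type u} [Category.{v} K] (R : K ⥤ K) (O : K) : ℕ → K
  | 0 => O
  | n + 1 => R.obj (iterObj R O n)

namespace FMoore

variable {K : Type u} [Category.{v} K] {F R : K ⥤ K} (adj : F ⊣ R) {O : K}

def iterLift (M : FMoore F O) : ∀ n : ℕ, M.E ⟶ iterObj R O n
  | 0 => M.s
  | n + 1 => adj.homEquiv _ _ (M.d ≫ iterLift M n)

lemma homEquiv_symm_iterLift_succ (M : FMoore F O) (n : ℕ) :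
    (adj.homEquiv _ _).symm (iterLift adj M (n + 1)) = M.d ≫ iterLift adj M n :=
  (adj.homEquiv _ _).symm_apply_apply _

variable [HasCountableProducts K]

variable (O) in
noncomputable abbrev final : FMoore F O where
  E := ∏ᶜ fun n : ℕ => iterObj R O n
  d := Pi.lift fun n => (adj.homEquiv _ _).symm (Pi.π _ (n + 1))
  s := Pi.π _ 0

lemma map_comp_final_d_π {E : K} (f : E ⟶ ∏ᶜ fun n : ℕ => iterObj R O n) (n : ℕ) :
    F.map f ≫ (final adj O).d ≫ Pi.π _ n = (adj.homEquiv _ _).symm (f ≫ Pi.π _ (n + 1)) := by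
  rw [Pi.lift_π]
  exact (adj.homEquiv_naturality_left_symm f (Pi.π (fun n => iterObj R O n) (n + 1))).symm

lemma Hom.f_π_eq_iterLift {M : FMoore F O} (u : Hom M (final adj O)) (n : ℕ) :
    u.f ≫ Pi.π _ n = iterLift adj M n := by
  induction n with
  | zero => exact u.hs.symm
  | succ n ih =>
    refine (adj.eq_homEquiv_apply _ _).mpr ?_
    calc (adj.homEquiv _ _).symm (u.f ≫ Pi.π _ (n + 1))
        = F.map u.f ≫ (final adj O).d ≫ Pi.π _ n := (map_comp_final_d_π adj u.f n).symm
      _ = M.d ≫ iterLift adj M n := by rw [← Category.assoc, ← u.hd, Category.assoc, ih]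

noncomputable def toFinal (M : FMoore F O) : Hom M (final adj O) where
  f := Pi.lift (iterLift adj M)
  hd := Pi.hom_ext _ _ fun n => by
    simp only [Category.assoc]
    rw [map_comp_final_d_π, Pi.lift_π, ← homEquiv_symm_iterLift_succ]
    exact congrArg _ (Pi.lift_π _ _).symm
  hs := (Pi.lift_π (iterLift adj M) 0).symm

noncomputable def isTerminalFinal : IsTerminal (final adj O) :=
  IsTerminal.ofUniqueHom (toFinal adj) fun M u =>
    Hom.ext <| Pi.hom_ext _ _ fun n => by
      rw [Hom.f_π_eq_iterLift]
      exact (Pi.lift_π _ n).symm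

end FMoore

/-- If `K` has countable products and `F ⊣ R`, then the category of `F`-Moore machines
with output `O` has a terminal object whose carrier is `O_∞ = ∏_{n ≥ 0} Rⁿ O`. -/
theorem fMoore_isTerminal_prod_iter
    {K : Type u} [Category.{v} K] [HasCountableProducts K]
    (F : K ⥤ K) (R : K ⥤ K) (adj : F ⊣ R) (O : K) :
    ∃ (dInfty : F.obj (∏ᶜ fun n : ℕ => iterObj R O n) ⟶ ∏ᶜ fun n : ℕ => iterObj R O n)
      (sInfty : (∏ᶜ fun n : ℕ => iterObj R O n) ⟶ O),
      Nonempty (IsTerminal (FMoore.mk (∏ᶜ fun n : ℕ => iterObj R O n) dInfty sInfty)) :=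
  ⟨(FMoore.final adj O).d, (FMoore.final adj O).s, ⟨FMoore.isTerminalFinal adj⟩⟩
end

section
/- Let K be a category with countable products, F : K ⥤ K an endofunctor with a right adjoint R, and O an object of K. Then the category F-Mly of F-Mealy machines with output O has a terminal object whose underlying carrier object is the countable product O_∞ = ∏_{n ≥ 1} Rⁿ(O) of the iterates of R applied to O. Explicitly, there is an F-Mealy machine structure (O_∞, d_∞, s_∞) such that for every F-Mealy machine (E,d,s) there is a unique morphism of F-Mealy machines (E,d,s) → (O_∞, d_∞, s_∞). -/
open CategoryTheory Limits

universe w w' v u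

/-!
A map `f : E ⟶ O_∞` is a family of maps `fₙ : E ⟶ Rⁿ⁺¹ O`, and transposing along `F ⊣ R`
turns the two equations for `f` to be a morphism of machines into the recursion
`f₀ = s♯`, `fₙ₊₁ = (d ≫ fₙ)♯`. That recursion has exactly one solution, the behaviour of the
machine, so each machine has exactly one morphism into `O_∞`.
-/

namespace FMealy

variable {K : Type u} [Category.{v} K] {F R : K ⥤ K} (adj : F ⊣ R) {O : K}

def behavior (M : FMealy F O) : (n : ℕ) → (M.E ⟶ iterObj R O (n + 1))
  | 0 => adj.homEquiv _ _ M.s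
  | n + 1 => adj.homEquiv _ _ (M.d ≫ behavior M n)

theorem eq_behavior_iff (M : FMealy F O) (b : (n : ℕ) → (M.E ⟶ iterObj R O (n + 1))) :
    (∀ n, b n = M.behavior adj n) ↔
      b 0 = adj.homEquiv _ _ M.s ∧ ∀ n, b (n + 1) = adj.homEquiv _ _ (M.d ≫ b n) := by
  constructor
  · intro h
    exact ⟨h 0, fun n => by rw [h, h]; rfl⟩
  · rintro ⟨h₀, hsucc⟩ n
    induction n with
    | zero => exact h₀
    | succ n ih => rw [hsucc, ih]; rfl

noncomputable section

variable [HasProductsOfShape ℕ K]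

variable (R O) in
abbrev prodIter : K := ∏ᶜ fun n : ℕ => iterObj R O (n + 1)

def finalD : F.obj (prodIter R O) ⟶ prodIter R O :=
  Pi.lift fun n => (adj.homEquiv _ _).symm (Pi.π _ (n + 1))

def finalS : F.obj (prodIter R O) ⟶ O :=
  (adj.homEquiv _ O).symm (Pi.π _ 0)

variable (O) in
def final : FMealy F O := ⟨prodIter R O, finalD adj, finalS adj⟩

theorem map_comp_finalS {E : K} (f : E ⟶ prodIter R O) :
    F.map f ≫ finalS adj = (adj.homEquiv _ O).symm (f ≫ Pi.π _ 0) :=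
  (adj.homEquiv_naturality_left_symm f _).symm

theorem map_comp_finalD_π {E : K} (f : E ⟶ prodIter R O) (n : ℕ) :
    F.map f ≫ finalD adj ≫ Pi.π _ n = (adj.homEquiv _ _).symm (f ≫ Pi.π _ (n + 1)) := by
  rw [finalD, Pi.lift_π]
  exact (adj.homEquiv_naturality_left_symm f _).symm

theorem forall_comp_π_eq_behavior_iff (M : FMealy F O) (f : M.E ⟶ prodIter R O) :
    (∀ n, f ≫ Pi.π _ n = M.behavior adj n) ↔
      M.d ≫ f = F.map f ≫ finalD adj ∧ M.s = F.map f ≫ finalS adj := by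
  have hd : M.d ≫ f = F.map f ≫ finalD adj ↔
      ∀ n, f ≫ Pi.π _ (n + 1) = adj.homEquiv _ _ (M.d ≫ f ≫ Pi.π _ n) := by
    rw [Pi.hom_ext_iff]
    refine forall_congr' fun n => ?_
    rw [Category.assoc, Category.assoc, map_comp_finalD_π, Equiv.eq_symm_apply]
    exact eq_comm
  have hs : M.s = F.map f ≫ finalS adj ↔ f ≫ Pi.π _ 0 = adj.homEquiv _ _ M.s := by
    rw [map_comp_finalS, Equiv.eq_symm_apply]
    exact eq_comm
  rw [hd, hs, and_comm, eq_behavior_iff]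

def isTerminal_final : IsTerminal (final adj O) :=
  IsTerminal.ofUniqueHom
    (fun M =>
      have h := (forall_comp_π_eq_behavior_iff adj M _).1 (Pi.lift_π (M.behavior adj))
      ⟨Pi.lift (M.behavior adj), h.1, h.2⟩)
    (fun M m => Hom.ext <| Pi.hom_ext _ _ fun n => by
      rw [Pi.lift_π]
      exact (forall_comp_π_eq_behavior_iff adj M m.f).2 ⟨m.hd, m.hs⟩ n)

end

end FMealy

/-- If `K` has countable products and `F ⊣ R`, then the category of `F`-Mealy machines
with output `O` has a terminal object whose carrier is `O_∞ = ∏_{n ≥ 1} Rⁿ O`. -/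
theorem fMealy_isTerminal_prod_iter
    {K : Type u} [Category.{v} K] [HasCountableProducts K]
    (F : K ⥤ K) (R : K ⥤ K) (adj : F ⊣ R) (O : K) :
    ∃ (dInfty : F.obj (∏ᶜ fun n : ℕ => iterObj R O (n + 1)) ⟶ ∏ᶜ fun n : ℕ => iterObj R O (n + 1))
      (sInfty : F.obj (∏ᶜ fun n : ℕ => iterObj R O (n + 1)) ⟶ O),
      Nonempty (IsTerminal (FMealy.mk (∏ᶜ fun n : ℕ => iterObj R O (n + 1)) dInfty sInfty)) :=
  ⟨FMealy.finalD adj, FMealy.finalS adj, ⟨FMealy.isTerminal_final adj⟩⟩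
end

section
/- Let K be a category with countable products, F : K ⥤ K an endofunctor with a right adjoint R, and O an object of K. Let (O_∞, d_∞, s_∞) be the terminal object of the category F-Mre of F-Moore machines with output O (with carrier O_∞ = ∏_{n ≥ 0} Rⁿ(O) and F-algebra structure d_∞ : F(O_∞) ⟶ O_∞). Then the functor B : F-Mre ⥤ Alg(F)/(O_∞, d_∞), sending a machine (E,d,s) to the unique F-algebra morphism u_E : (E,d) → (O_∞,d_∞) underlying the unique machine morphism into the terminal machine and acting on morphisms of machines by their underlying algebra morphisms, has a left adjoint. -/
open CategoryTheory Limits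

universe w w' v u

namespace FMoore

variable {K : Type u} [Category.{v} K] {F : K ⥤ K} {O : K}

/-- The underlying `F`-algebra of an `F`-Moore machine. -/
def toAlgebra (F : K ⥤ K) (O : K) : FMoore F O ⥤ Endofunctor.Algebra F where
  obj M := ⟨M.E, M.d⟩
  map {M N} u := ⟨u.f, u.hd.symm⟩

/-- The behaviour functor `B` into the slice of `F`-algebras over the algebra underlying
a terminal machine `T`, sending a machine `M` to the unique algebra morphism underlying
the unique machine morphism `M ⟶ T`. -/
def behaviour {F : K ⥤ K} {O : K} (T : FMoore F O) (hT : IsTerminal T) :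
    FMoore F O ⥤ Over ((toAlgebra F O).obj T) where
  obj M := Over.mk ((toAlgebra F O).map (hT.from M))
  map {M N} u := Over.homMk ((toAlgebra F O).map u) (by
    show (toAlgebra F O).map u ≫ (toAlgebra F O).map (hT.from N) = (toAlgebra F O).map (hT.from M)
    rw [← Functor.map_comp]
    congr 1
    exact hT.hom_ext _ _)
  map_id M := by
    ext
    exact congrArg Endofunctor.Algebra.Hom.f ((toAlgebra F O).map_id M)
  map_comp u v := by
    ext
    exact congrArg Endofunctor.Algebra.Hom.f ((toAlgebra F O).map_comp u v)

end FMoore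

/-!
Over a terminal machine `T`, a machine `M` is determined by its underlying algebra and the
algebra morphism `u_M` to `T`: its output is forced to be `s_M = u_M ≫ s_T`. Hence the
behaviour functor is an equivalence of categories, and in particular a right adjoint.
-/

namespace FMoore

variable {K : Type u} [Category.{v} K] {F : K ⥤ K} {O : K} {T : FMoore F O} (hT : IsTerminal T)

def ofOver (X : Over ((toAlgebra F O).obj T)) : FMoore F O :=
  ⟨X.left.a, X.left.str, X.hom.f ≫ T.s⟩

def toTerminalOfOver (X : Over ((toAlgebra F O).obj T)) : ofOver X ⟶ T :=
  ⟨X.hom.f, X.hom.h.symm, rfl⟩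

instance behaviour_faithful : (behaviour T hT).Faithful where
  map_injective h := Hom.ext (congrArg (fun w => w.left.f) h)

instance behaviour_full : (behaviour T hT).Full where
  map_surjective {M N} v := by
    have hv : v.left.f ≫ (hT.from N).f = (hT.from M).f :=
      congrArg Endofunctor.Algebra.Hom.f (Over.w v)
    refine ⟨⟨v.left.f, v.left.h.symm, ?_⟩, rfl⟩
    rw [(hT.from M).hs, (hT.from N).hs, ← hv]
    exact Category.assoc _ _ _

theorem behaviour_obj_ofOver (X : Over ((toAlgebra F O).obj T)) :
    (behaviour T hT).obj (ofOver X) = X := by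
  have h : hT.from (ofOver X) = toTerminalOfOver X := hT.hom_ext _ _
  simp only [behaviour, h]
  rfl

instance behaviour_essSurj : (behaviour T hT).EssSurj where
  mem_essImage X := ⟨ofOver X, ⟨eqToIso (behaviour_obj_ofOver hT X)⟩⟩

instance behaviour_isEquivalence : (behaviour T hT).IsEquivalence where

end FMoore

theorem fMoore_behaviour_isRightAdjoint_general
    {K : Type u} [Category.{v} K] [HasCountableProducts K]
    (F : K ⥤ K) (R : K ⥤ K) (O : K)
    (dInfty : F.obj (∏ᶜ fun n : ℕ => iterObj R O n) ⟶ ∏ᶜ fun n : ℕ => iterObj R O n)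
    (sInfty : (∏ᶜ fun n : ℕ => iterObj R O n) ⟶ O)
    (hT : IsTerminal (FMoore.mk (∏ᶜ fun n : ℕ => iterObj R O n) dInfty sInfty)) :
    (FMoore.behaviour _ hT).IsRightAdjoint :=
  Functor.isRightAdjoint_of_isEquivalence

/-- If `(O_∞, d_∞, s_∞)` is the terminal `F`-Moore machine with output `O`, with carrier
`O_∞ = ∏_{n ≥ 0} Rⁿ O`, then the behaviour functor `B : F-Mre ⥤ Alg(F)/(O_∞, d_∞)` has a
left adjoint. -/
theorem fMoore_behaviour_isRightAdjoint
    {K : Type u} [Category.{v} K] [HasCountableProducts K]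
    (F : K ⥤ K) (R : K ⥤ K) (adj : F ⊣ R) (O : K)
    (dInfty : F.obj (∏ᶜ fun n : ℕ => iterObj R O n) ⟶ ∏ᶜ fun n : ℕ => iterObj R O n)
    (sInfty : (∏ᶜ fun n : ℕ => iterObj R O n) ⟶ O)
    (hT : IsTerminal (FMoore.mk (∏ᶜ fun n : ℕ => iterObj R O n) dInfty sInfty)) :
    (FMoore.behaviour _ hT).IsRightAdjoint :=
  fMoore_behaviour_isRightAdjoint_general F R O dInfty sInfty hT
end

section
/- Let K be a category with countable products, F : K ⥤ K an endofunctor with right adjoint R (with adjunction counit ε and unit η), and O an object of K, and let O_∞ = ∏_{n ≥ 0} Rⁿ(O). Then O_∞ with the coalgebra structure given by ⟨π₀, ρ⟩ : O_∞ ⟶ O ⨯ R(O_∞), where π₀ : O_∞ ⟶ O is the projection on the 0-th factor and ρ : O_∞ ⟶ R(O_∞) is the canonical map induced (via the product-preservation of the right adjoint R) by the projections πₙ₊₁ : O_∞ ⟶ Rⁿ⁺¹(O), is a terminal object in the category of coalgebras of the endofunctor A ↦ O ⨯ R(A) of K. -/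
open CategoryTheory Limits

universe v u

/-- If `K` has countable products and `F ⊣ R`, then `O_∞ = ∏_{n ≥ 0} Rⁿ O`, equipped
with the coalgebra structure `⟨π₀, ρ⟩` — where `π₀` is the projection onto the `n = 0`
factor and `ρ : O_∞ ⟶ R O_∞` is the canonical map induced, via product preservation of
the right adjoint `R`, by the projections `π_{n+1} : O_∞ ⟶ Rⁿ⁺¹ O` — is a terminal
object in the category of coalgebras for the endofunctor `A ↦ O ⨯ R A`. -/
theorem prod_iter_isTerminal_coalgebra_moore
    {K : Type u} [Category.{v} K] [HasCountableProducts K]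
    (F : K ⥤ K) (R : K ⥤ K) (adj : F ⊣ R) (O : K) :
    ∃ ρ : (∏ᶜ fun n : ℕ => iterObj R O n) ⟶ R.obj (∏ᶜ fun n : ℕ => iterObj R O n),
      (∀ n : ℕ, ρ ≫ R.map (Pi.π (fun k : ℕ => iterObj R O k) n) =
          Pi.π (fun k : ℕ => iterObj R O k) (n + 1)) ∧
      Nonempty (IsTerminal (C := Endofunctor.Coalgebra (R ⋙ prod.functor.obj O))
        ⟨∏ᶜ fun n : ℕ => iterObj R O n,
          prod.lift (Pi.π (fun k : ℕ => iterObj R O k) 0) ρ⟩) := by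
  have := adj.rightAdjoint_preservesLimits
  set P := ∏ᶜ fun n : ℕ => iterObj R O n with hP
  have hL : IsLimit (R.mapCone (limit.cone (Discrete.functor fun n : ℕ => iterObj R O n))) :=
    isLimitOfPreserves R (limit.isLimit _)
  have ext : ∀ {A : K} (s t : A ⟶ R.obj P),
      (∀ n, s ≫ R.map (Pi.π (fun k : ℕ => iterObj R O k) n)
        = t ≫ R.map (Pi.π (fun k : ℕ => iterObj R O k) n)) → s = t := by
    intro A s t h
    exact hL.hom_ext fun ⟨n⟩ => h n
  have key : ∀ (A : K) (g : ∀ n, A ⟶ R.obj (iterObj R O n)),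
      ∃ t : A ⟶ R.obj P, ∀ n, t ≫ R.map (Pi.π (fun k : ℕ => iterObj R O k) n) = g n := by
    intro A g
    obtain ⟨t, ht, -⟩ := hL.existsUnique ⟨A, Discrete.natTrans fun ⟨n⟩ => g n⟩
    exact ⟨t, fun n => ht ⟨n⟩⟩
  obtain ⟨ρ, hρ⟩ := key P (fun n => Pi.π (fun k : ℕ => iterObj R O k) (n + 1))
  refine ⟨ρ, hρ, ⟨?_⟩⟩
  set str : P ⟶ O ⨯ R.obj P := prod.lift (Pi.π (fun k : ℕ => iterObj R O k) 0) ρ with hstr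
  -- for each coalgebra A, the components
  let g : ∀ (A : Endofunctor.Coalgebra (R ⋙ prod.functor.obj O)) (n : ℕ),
      A.V ⟶ iterObj R O n := fun A n =>
    Nat.rec (A.str ≫ prod.fst) (fun _ gn => A.str ≫ prod.snd ≫ R.map gn) n
  have hcomp : ∀ (A : Endofunctor.Coalgebra (R ⋙ prod.functor.obj O))
      (m : A.V ⟶ P), A.str ≫ prod.map (𝟙 O) (R.map m) = m ≫ str →
      ∀ n, m ≫ Pi.π (fun k : ℕ => iterObj R O k) n = g A n := by
    intro A m hm n
    induction n with
    | zero =>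
        have := hm =≫ prod.fst
        erw [Category.assoc, prod.map_fst, Category.comp_id, hstr, Category.assoc, prod.lift_fst] at this
        exact this.symm
    | succ n ih =>
        have hsnd := hm =≫ prod.snd
        erw [Category.assoc, prod.map_snd, hstr, Category.assoc, prod.lift_snd] at hsnd
        have : m ≫ Pi.π (fun k : ℕ => iterObj R O k) (n + 1)
            = m ≫ ρ ≫ R.map (Pi.π (fun k : ℕ => iterObj R O k) n) := by
          rw [hρ]
          rfl
        erw [this, ← Category.assoc, ← hsnd, Category.assoc, Category.assoc, ← R.map_comp, ih]
        rfl
  have hHmap : ∀ {A : K} (f : A ⟶ P),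
      (R ⋙ prod.functor.obj O).map f = prod.map (𝟙 O) (R.map f) := fun f => rfl
  refine IsTerminal.ofUniqueHom (fun A => ⟨Pi.lift (g A), ?_⟩) (fun A m => ?_)
  · rw [hHmap]
    apply Limits.prod.hom_ext
    · erw [Category.assoc, prod.map_fst, Category.comp_id, Category.assoc, hstr, prod.lift_fst]
      exact (Pi.lift_π (g A) 0).symm
    · erw [Category.assoc, Category.assoc, prod.map_snd]
      show A.str ≫ prod.snd ≫ R.map (Pi.lift (g A)) = Pi.lift (g A) ≫ str ≫ prod.snd
      erw [hstr, prod.lift_snd]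
      apply ext
      intro n
      erw [Category.assoc, Category.assoc, Category.assoc, ← R.map_comp, limit.lift_π, hρ,
        limit.lift_π]
      rfl
  · have hm := m.h
    rw [hHmap] at hm
    ext : 1
    apply limit.hom_ext
    intro ⟨n⟩
    have := hcomp A m.f hm n
    simpa using this
end

section
/- Let K be a category with countable products, F : K ⥤ K an endofunctor with right adjoint R, and O an object of K. Then the object O_∞ = ∏_{n ≥ 1} Rⁿ(O) carries a coalgebra structure for the endofunctor A ↦ R(O) ⨯ R(A) of K (using binary products in K) which makes it the terminal coalgebra of this endofunctor: O_∞ equipped with the structure map ⟨π₁, ρ⟩, where π₁ : O_∞ ⟶ R(O) is the projection on the first factor and ρ : O_∞ ⟶ R(O_∞) is the canonical map induced (via product preservation of R) by the projections πₙ₊₁ : O_∞ ⟶ Rⁿ⁺¹(O) for n ≥ 1, is a terminal object in the category of coalgebras of the endofunctor A ↦ R(O) ⨯ R(A). -/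
/-!
A morphism `g` from a coalgebra `(A, ⟨c₁, c₂⟩)` into `O_∞` is determined by its components
`gₙ : A ⟶ Rⁿ⁺¹ O`, and the morphism condition says precisely `g₀ = c₁` and
`gₙ₊₁ = R(gₙ) ∘ c₂`. This recursion has exactly one solution, so there is exactly one
coalgebra morphism into `O_∞`.
-/

open CategoryTheory Limits

universe v u

theorem comp_prodMap_eq_comp_lift_iff {C : Type u} [Category.{v} C] {X Y Y' A B : C}
    [HasBinaryProduct X Y] [HasBinaryProduct X Y'] (s : A ⟶ X ⨯ Y) (f : Y ⟶ Y')
    (g : A ⟶ B) (a : B ⟶ X) (b : B ⟶ Y') :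
    s ≫ prod.map (𝟙 X) f = g ≫ prod.lift a b ↔
      g ≫ a = s ≫ prod.fst ∧ g ≫ b = s ≫ prod.snd ≫ f := by
  rw [prod.hom_ext_iff]
  simp only [Category.assoc, prod.lift_fst, prod.lift_snd, prod.map_fst, prod.map_snd,
    Category.comp_id]
  exact and_congr eq_comm eq_comm

noncomputable section

namespace IterProd

variable {K : Type u} [Category.{v} K] [HasCountableProducts K] (R : K ⥤ K) (O : K)

abbrev obj : K := ∏ᶜ fun n : ℕ => iterObj R O (n + 1)

abbrev π (n : ℕ) : obj R O ⟶ iterObj R O (n + 1) := Pi.π (fun k : ℕ => iterObj R O (k + 1)) n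

variable {R O}

section Unfold

variable {A : K} (c₁ : A ⟶ R.obj O) (c₂ : A ⟶ R.obj A)

def unfoldComponent : ∀ n : ℕ, A ⟶ iterObj R O (n + 1)
  | 0 => c₁
  | n + 1 => c₂ ≫ R.map (unfoldComponent n)

def unfold : A ⟶ obj R O :=
  Pi.lift (unfoldComponent c₁ c₂)

@[simp]
theorem unfold_π (n : ℕ) : unfold c₁ c₂ ≫ π R O n = unfoldComponent c₁ c₂ n :=
  Pi.lift_π _ _

end Unfold

variable (R O) [PreservesLimitsOfShape (Discrete ℕ) R]

/-- The projections `π (n + 1) : O_∞ ⟶ R (Rⁿ⁺¹ O)` assemble to a map into `∏ R (Rⁿ⁺¹ O)`,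
which `R` identifies with `R O_∞` because it preserves the product. -/
def shift : obj R O ⟶ R.obj (obj R O) :=
  Pi.lift (f := fun n => R.obj (iterObj R O (n + 1))) (fun n => π R O (n + 1)) ≫
    (PreservesProduct.iso R fun n => iterObj R O (n + 1)).inv

@[simp]
theorem shift_map_π (n : ℕ) : shift R O ≫ R.map (π R O n) = π R O (n + 1) := by
  rw [shift, Category.assoc, ← piComparison_comp_π, ← PreservesProduct.iso_hom,
    Iso.inv_hom_id_assoc]
  exact Pi.lift_π _ _

theorem comp_π_succ {A : K} (g : A ⟶ obj R O) (n : ℕ) :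
    g ≫ π R O (n + 1) = (g ≫ shift R O) ≫ R.map (π R O n) := by
  rw [Category.assoc, shift_map_π]
  rfl

def coalgebra : Endofunctor.Coalgebra (R ⋙ prod.functor.obj (R.obj O)) :=
  ⟨obj R O, prod.lift (π R O 0) (shift R O)⟩

variable {R O}

section Unfold

variable {A : K} (c₁ : A ⟶ R.obj O) (c₂ : A ⟶ R.obj A)

theorem comp_π_eq_unfoldComponent (g : A ⟶ obj R O) (h₀ : g ≫ π R O 0 = c₁)
    (hshift : g ≫ shift R O = c₂ ≫ R.map g) (n : ℕ) :
    g ≫ π R O n = unfoldComponent c₁ c₂ n := by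
  induction n with
  | zero => exact h₀
  | succ n ih =>
    rw [comp_π_succ, hshift, Category.assoc, ← R.map_comp, ih]
    rfl

theorem unfold_comp_shift : unfold c₁ c₂ ≫ shift R O = c₂ ≫ R.map (unfold c₁ c₂) := by
  rw [← cancel_mono (piComparison R _)]
  ext n
  simp only [Category.assoc, piComparison_comp_π, shift_map_π]
  rw [← R.map_comp, unfold_π]
  exact unfold_π c₁ c₂ (n + 1)

end Unfold

def unfoldHom (V : Endofunctor.Coalgebra (R ⋙ prod.functor.obj (R.obj O))) :
    V ⟶ coalgebra R O where
  f := unfold (V.str ≫ prod.fst) (V.str ≫ prod.snd)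
  h := (comp_prodMap_eq_comp_lift_iff _ _ _ _ _).2
    ⟨unfold_π _ _ 0, (unfold_comp_shift _ _).trans (Category.assoc _ _ _)⟩

theorem eq_unfoldHom {V : Endofunctor.Coalgebra (R ⋙ prod.functor.obj (R.obj O))}
    (m : V ⟶ coalgebra R O) : m = unfoldHom V := by
  obtain ⟨h₀, hshift⟩ := (comp_prodMap_eq_comp_lift_iff _ _ _ _ _).1 m.h
  refine Endofunctor.Coalgebra.Hom.ext (Pi.hom_ext _ _ fun n => ?_)
  exact (comp_π_eq_unfoldComponent _ _ m.f h₀ (hshift.trans (Category.assoc _ _ _).symm) n).trans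
    (unfold_π _ _ n).symm

variable (R O)

def isTerminalCoalgebra : IsTerminal (coalgebra R O) :=
  IsTerminal.ofUniqueHom unfoldHom fun _ => eq_unfoldHom

end IterProd

end

/-- If `K` has countable products and `F ⊣ R`, then `O_∞ = ∏_{n ≥ 1} Rⁿ O`, equipped
with the coalgebra structure `⟨π₁, ρ⟩` — where `π₁` is the projection onto the first
factor `R O` and `ρ : O_∞ ⟶ R O_∞` is the canonical map induced, via product
preservation of the right adjoint `R`, by the projections `π_{n+1} : O_∞ ⟶ Rⁿ⁺¹ O` —
is a terminal object in the category of coalgebras for the endofunctor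
`A ↦ R O ⨯ R A`. -/
theorem prod_iter_isTerminal_coalgebra_mealy
    {K : Type u} [Category.{v} K] [HasCountableProducts K]
    (F : K ⥤ K) (R : K ⥤ K) (adj : F ⊣ R) (O : K) :
    ∃ ρ : (∏ᶜ fun n : ℕ => iterObj R O (n + 1)) ⟶ R.obj (∏ᶜ fun n : ℕ => iterObj R O (n + 1)),
      (∀ n : ℕ, ρ ≫ R.map (Pi.π (fun k : ℕ => iterObj R O (k + 1)) n) =
          Pi.π (fun k : ℕ => iterObj R O (k + 1)) (n + 1)) ∧
      Nonempty (IsTerminal (C := Endofunctor.Coalgebra (R ⋙ prod.functor.obj (R.obj O)))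
        ⟨∏ᶜ fun n : ℕ => iterObj R O (n + 1),
          prod.lift (Pi.π (fun k : ℕ => iterObj R O (k + 1)) 0) ρ⟩) := by
  have := adj.isRightAdjoint
  exact ⟨IterProd.shift R O, IterProd.shift_map_π R O, ⟨IterProd.isTerminalCoalgebra R O⟩⟩
end

section
/- Let I and O be sets (types). The category of Mealy machines in Set with input I and output O — objects are triples (E, d : E × I → E, s : E × I → O), morphisms f : (E,d,s) → (T,d',s') are functions f : E → T with f(d(e,i)) = d'(f(e), i) and s(e,i) = s'(f(e), i) — has a terminal object whose carrier is the set of functions from nonempty finite lists over I to O (i.e., the function space [I⁺, O] where I⁺ is the free semigroup on I). -/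
open CategoryTheory Limits

universe u

/-- A Mealy machine in `Set` with input `I` and output `O`: a carrier type `E` with a
transition function `d : E × I → E` and an output function `s : E × I → O`. -/
structure MealySet (I O : Type u) : Type (u + 1) where
  E : Type u
  d : E × I → E
  s : E × I → O

namespace MealySet

variable {I O : Type u}

/-- A morphism of Mealy machines in `Set`. -/
@[ext]
structure Hom (M N : MealySet I O) : Type u where
  f : M.E → N.E
  hd : ∀ e i, f (M.d (e, i)) = N.d (f e, i)
  hs : ∀ e i, M.s (e, i) = N.s (f e, i)

instance : Category (MealySet I O) where
  Hom := Hom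
  id M := ⟨id, fun _ _ => rfl, fun _ _ => rfl⟩
  comp u v := ⟨v.f ∘ u.f, fun e i => by simp [u.hd, v.hd], fun e i => by simp [u.hs, v.hs]⟩
  id_comp u := Hom.ext rfl
  comp_id u := Hom.ext rfl
  assoc u v w := Hom.ext rfl

end MealySet

/-!
The behaviour of a state `e` assigns to each nonempty word the last output produced when the
word is fed to the machine from `e`. Morphisms preserve behaviours, and in the machine whose
states are the functions `I⁺ → O`, with `d (φ, i) = φ (i · -)` and `s (φ, i) = φ i`, every
state is its own behaviour. Hence sending a state to its behaviour is the unique morphism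
into that machine.
-/

namespace MealySet

variable {I O : Type u}

/-- The fold carries the current state together with the input letter about to be read. -/
def behaviour (M : MealySet I O) (e : M.E) (w : I × List I) : O :=
  M.s (w.2.foldl (fun p j => (M.d p, j)) (e, w.1))

theorem behaviour_cons (M : MealySet I O) (e : M.E) (i j : I) (l : List I) :
    M.behaviour e (i, j :: l) = M.behaviour (M.d (e, i)) (j, l) := rfl

theorem behaviour_hom {M N : MealySet I O} (m : M ⟶ N) (e : M.E) :
    N.behaviour (m.f e) = M.behaviour e := by
  funext ⟨i, l⟩
  induction l generalizing e i with
  | nil => exact (m.hs e i).symm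
  | cons j l ih => rw [behaviour_cons, behaviour_cons, ← m.hd, ih]

variable (I O) in
def behaviours : MealySet I O where
  E := I × List I → O
  d p w := p.1 (p.2, w.1 :: w.2)
  s p := p.1 (p.2, [])

theorem behaviours_behaviour (φ : (behaviours I O).E) : (behaviours I O).behaviour φ = φ := by
  funext ⟨i, l⟩
  induction l generalizing φ i with
  | nil => rfl
  | cons j l ih => rw [behaviour_cons, ih]; rfl

def toBehaviours (M : MealySet I O) : M ⟶ behaviours I O where
  f := M.behaviour
  hd _ _ := rfl
  hs _ _ := rfl

theorem hom_behaviours_eq (M : MealySet I O) (m : M ⟶ behaviours I O) : m = M.toBehaviours :=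
  Hom.ext <| funext fun e => (behaviours_behaviour (m.f e)).symm.trans (behaviour_hom m e)

def isTerminalBehaviours : IsTerminal (behaviours I O) :=
  IsTerminal.ofUniqueHom toBehaviours hom_behaviours_eq

end MealySet

/-- The category of Mealy machines in `Set` with input `I` and output `O` has a terminal
object whose carrier is the function space of functions from nonempty lists over `I`
(realized as pairs `I × List I`, the free semigroup `I⁺` on `I`) to `O`. -/
theorem mealySet_isTerminal_funsOnNonemptyLists (I O : Type u) :
    ∃ (d : ((I × List I → O) × I) → (I × List I → O)) (s : ((I × List I → O) × I) → O),
      Nonempty (IsTerminal (MealySet.mk (I × List I → O) d s)) :=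
  ⟨(MealySet.behaviours I O).d, (MealySet.behaviours I O).s, ⟨MealySet.isTerminalBehaviours⟩⟩
end
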